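/- arXiv:1205.0416 — 2 statements merged into one kernel-verified Lean document; each statement's English description precedes it below -/
import Mathlib

section
/- Let N ≥ 2 and n ≥ 2 be integers. The image of SL_N(ℤ[1/n]) under the diagonal embedding into the topological group SL_N(ℝ) × ∏_{p | n} SL_N(ℚ_p) (the product taken over the prime divisors p of n, with the embedding induced by the ring inclusions ℤ[1/n] ⊂ ℝ and ℤ[1/n] ⊂ ℚ_p) is a discrete subgroup. -/
/-!
Take the neighbourhood of a point `γ₀` of the image consisting of the points whose real entries
are within distance `< 1` and whose `p`-adic entries are within distance `< 1` of those of `γ₀`.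
If `γ` also lies in it, each entry `q` of `γ - γ₀` is in `ℤ[1/n]`, so its denominator divides a
power of `n`; being `p`-integral for every `p ∣ n`, that denominator is `1`. Thus `q` is an integer
with `|q| < 1`, i.e. `q = 0`.
-/

/-- the subring `ℤ[1/n]` of `ℚ`, as a set -/
def zInv (n : ℕ) : Set ℚ := {x : ℚ | ∃ (m : ℤ) (k : ℕ), x = (m : ℚ) / (n : ℚ) ^ k}

open Filter Topology

theorem discreteTopology_of_eventually_eq {X : Type*} [TopologicalSpace X] {S : Set X}
    (h : ∀ x ∈ S, ∀ᶠ y in 𝓝 x, y ∈ S → y = x) : DiscreteTopology S := by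
  refine discreteTopology_subtype_iff.mpr fun x hx => inf_principal_eq_bot.mpr ?_
  filter_upwards [eventually_nhdsWithin_of_eventually_nhds (h x hx), self_mem_nhdsWithin]
    with y hyx hne hyS
  exact hne (hyx hyS)

theorem Padic.not_dvd_den_of_norm_le_one {p : ℕ} [Fact p.Prime] {q : ℚ}
    (h : ‖(q : ℚ_[p])‖ ≤ 1) : ¬ p ∣ q.den :=
  Rat.padicValuation_le_one_iff.mp ((norm_rat_le_one_iff_padicValuation_le_one p).mp h)

theorem exists_den_dvd_pow_of_mem_zInv {n : ℕ} {q : ℚ} (hq : q ∈ zInv n) :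
    ∃ k, q.den ∣ n ^ k := by
  obtain ⟨m, k, rfl⟩ := hq
  refine ⟨k, Int.natCast_dvd_natCast.mp ?_⟩
  have := Rat.den_dvd m ((n : ℤ) ^ k)
  rw [Rat.divInt_eq_div] at this
  exact_mod_cast this

theorem exists_den_sub_dvd_pow_of_mem_zInv {n : ℕ} {a b : ℚ} (ha : a ∈ zInv n)
    (hb : b ∈ zInv n) : ∃ k, (a - b).den ∣ n ^ k := by
  obtain ⟨k, hk⟩ := exists_den_dvd_pow_of_mem_zInv ha
  obtain ⟨l, hl⟩ := exists_den_dvd_pow_of_mem_zInv hb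
  exact ⟨k + l, pow_add n k l ▸ (Rat.sub_den_dvd a b).trans (Nat.mul_dvd_mul hk hl)⟩

theorem Rat.eq_zero_of_den_dvd_pow_of_abs_lt_one {n k : ℕ} {q : ℚ} (hden : q.den ∣ n ^ k)
    (habs : |q| < 1)
    (hnorm : ∀ (p : ℕ) [Fact p.Prime], p ∣ n → ‖(q : ℚ_[p])‖ ≤ 1) : q = 0 := by
  have hcop : q.den.Coprime n := Nat.coprime_of_dvd fun p hp hpd hpn =>
    haveI : Fact p.Prime := ⟨hp⟩
    Padic.not_dvd_den_of_norm_le_one (hnorm p hpn) hpd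
  have hint : (q.num : ℚ) = q :=
    Rat.coe_int_num_of_den_eq_one ((hcop.pow_right k).eq_one_of_dvd hden)
  rw [← hint, ← Int.cast_abs] at habs
  have hnum : q.num = 0 := Int.abs_lt_one_iff.mp (by exact_mod_cast habs)
  rw [← hint, hnum, Int.cast_zero]

theorem eq_of_mem_zInv_of_dist_lt {n : ℕ} {a b : ℚ} (ha : a ∈ zInv n) (hb : b ∈ zInv n)
    (hreal : dist (a : ℝ) (b : ℝ) < 1)
    (hpadic : ∀ (p : ℕ) [Fact p.Prime], p ∣ n → dist (a : ℚ_[p]) (b : ℚ_[p]) ≤ 1) :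
    a = b := by
  obtain ⟨k, hk⟩ := exists_den_sub_dvd_pow_of_mem_zInv ha hb
  refine sub_eq_zero.mp (Rat.eq_zero_of_den_dvd_pow_of_abs_lt_one hk ?_ fun p _ hpn => ?_)
  · rw [Real.dist_eq] at hreal
    exact_mod_cast hreal
  · simpa only [dist_eq_norm, Padic.coe_sub] using hpadic p hpn

theorem statement3_general (N n : ℕ) (hn : 2 ≤ n) :
    DiscreteTopology
      ({x : Matrix (Fin N) (Fin N) ℝ ×
          ((p : n.primeFactors) → Matrix (Fin N) (Fin N)
            (@Padic p.1 ⟨Nat.prime_of_mem_primeFactors p.2⟩)) |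
        ∃ γ : Matrix (Fin N) (Fin N) ℚ, γ.det = 1 ∧ (∀ i j, γ i j ∈ zInv n) ∧
          x.1 = γ.map (fun a => (a : ℝ)) ∧
          ∀ p : n.primeFactors,
            x.2 p = γ.map (fun a => (a : @Padic p.1 ⟨Nat.prime_of_mem_primeFactors p.2⟩))} :
        Set _) := by
  refine discreteTopology_of_eventually_eq ?_
  rintro x ⟨γ₀, -, hγ₀, hx₁, hx₂⟩
  have hnear₁ : ∀ i j, ∀ᶠ y in 𝓝 x, dist (y.1 i j) (x.1 i j) < 1 := fun i j =>
    (continuous_fst.matrix_elem i j).continuousAt.eventually (Metric.ball_mem_nhds _ one_pos)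
  have hnear₂ : ∀ p i j, ∀ᶠ y in 𝓝 x, dist (y.2 p i j) (x.2 p i j) < 1 := fun p i j =>
    (((continuous_apply p).comp continuous_snd).matrix_elem i j).continuousAt.eventually
      (Metric.ball_mem_nhds _ one_pos)
  filter_upwards [eventually_all.2 fun i => eventually_all.2 (hnear₁ i),
    eventually_all.2 fun p => eventually_all.2 fun i => eventually_all.2 (hnear₂ p i)]
    with y hyx₁ hyx₂
  rintro ⟨γ, -, hγ, hy₁, hy₂⟩
  have hγγ₀ : γ = γ₀ := by
    ext i j
    refine eq_of_mem_zInv_of_dist_lt (hγ i j) (hγ₀ i j) ?_ fun p _ hpn => ?_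
    · simpa only [hy₁, hx₁, Matrix.map_apply] using hyx₁ i j
    · have hp : p ∈ n.primeFactors := Nat.mem_primeFactors.mpr ⟨Fact.out, hpn, by omega⟩
      simpa only [hy₂, hx₂, Matrix.map_apply] using (hyx₂ ⟨p, hp⟩ i j).le
  exact Prod.ext (by rw [hy₁, hx₁, hγγ₀]) (funext fun p => by rw [hy₂, hx₂, hγγ₀])

/-- The diagonal copy of `SL_N(ℤ[1/n])` in
`SL_N(ℝ) × ∏_{p ∣ n} SL_N(ℚ_p)` is discrete. (Discreteness of a subset of the
subgroup is equivalent to its discreteness in the ambient product of matrix spaces,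
since the subspace topology is transitive.) -/
theorem statement3 (N n : ℕ) (hN : 2 ≤ N) (hn : 2 ≤ n) :
    DiscreteTopology
      ({x : Matrix (Fin N) (Fin N) ℝ ×
          ((p : n.primeFactors) → Matrix (Fin N) (Fin N)
            (@Padic p.1 ⟨Nat.prime_of_mem_primeFactors p.2⟩)) |
        ∃ γ : Matrix (Fin N) (Fin N) ℚ, γ.det = 1 ∧ (∀ i j, γ i j ∈ zInv n) ∧
          x.1 = γ.map (fun a => (a : ℝ)) ∧
          ∀ p : n.primeFactors,
            x.2 p = γ.map (fun a => (a : @Padic p.1 ⟨Nat.prime_of_mem_primeFactors p.2⟩))} :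
        Set _) :=
  statement3_general N n hn
end

section
/- Let N ≥ 2, and for each prime p let μ_p be the Haar measure on SL_N(ℚ_p) normalized so that μ_p(SL_N(ℤ_p)) = 1. There exist a constant a > 0 and a finite set S of primes such that for every prime p ∉ S and every integer k ≥ 0, μ_p({g ∈ SL_N(ℚ_p) : max_{i,j} |g_{ij}|_p = p^k}) ≥ p^{ak}. -/
open MeasureTheory

instance {m n α : Type*} [MeasurableSpace α] : MeasurableSpace (Matrix m n α) :=
  inferInstanceAs (MeasurableSpace (m → n → α))

noncomputable instance (p : ℕ) [Fact p.Prime] : MeasurableSpace ℚ_[p] := borel _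

/-- the maximum of the norms of the entries of a matrix -/
noncomputable def matSupNorm {N : ℕ} {K : Type*} [NormedField K]
    (g : Matrix (Fin N) (Fin N) K) : ℝ :=
  ⨆ ij : Fin N × Fin N, ‖g ij.1 ij.2‖

/-- `μ` is a Haar measure on `SL_N(K)`, viewed as a measure on the ambient matrix
space supported on `{det = 1}`. -/
def IsHaarOnSL {N : ℕ} {K : Type*} [NormedField K] [MeasurableSpace K]
    (μ : Measure (Matrix (Fin N) (Fin N) K)) : Prop :=
  μ {x | x.det ≠ 1} = 0 ∧
  (∀ g : Matrix (Fin N) (Fin N) K, g.det = 1 →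
    ∀ A : Set (Matrix (Fin N) (Fin N) K), MeasurableSet A →
      μ ((fun x => g * x) ⁻¹' A) = μ A) ∧
  (∀ U : Set (Matrix (Fin N) (Fin N) K), IsOpen U →
    (U ∩ {x | x.det = 1}).Nonempty → 0 < μ U) ∧
  (∀ C : Set (Matrix (Fin N) (Fin N) K), IsCompact C → μ C < ⊤)

/-!
The sphere `{g ∈ SL_N(ℚ_p) : max |g_ij|_p = p^k}` contains the `p^k` translates
`g_t · SL_N(ℤ_p)`, `0 ≤ t < p^k`, of `g_t = diag(p^{-k}, p^k, 1, …, 1) · (1 + t p^{-k} E₁₀)`.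
Left multiplication by `g_t` scales row `0` of `u ∈ SL_N(ℤ_p)` by `p^{-k}` (that row contains
a unit, as `det u = 1`), replaces row `1` by `t u₀ + p^k u₁`, which stays integral, and fixes
the other rows; so `g_t u` lies in the sphere. Two translates can only meet if `p^k ∣ t - s`,
so they are disjoint, and each has measure `1` by left invariance. Hence `a = 1` works for
every prime.
-/

open Matrix Function

instance {m n α : Type*} [Countable m] [Countable n] [TopologicalSpace α] [MeasurableSpace α]
    [BorelSpace α] [SecondCountableTopology α] : BorelSpace (Matrix m n α) :=
  inferInstanceAs (BorelSpace (m → n → α))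

instance (p : ℕ) [Fact p.Prime] : BorelSpace ℚ_[p] := ⟨rfl⟩

lemma Matrix.leftInverse_nonsing_inv_mul {n R : Type*} [Fintype n] [DecidableEq n] [CommRing R]
    {g : Matrix n n R} (hg : IsUnit g.det) : LeftInverse (g⁻¹ * ·) (g * ·) :=
  fun x => by simp [← Matrix.mul_assoc, nonsing_inv_mul _ hg]

section Measure

variable {K : Type*} [NormedField K] [MeasurableSpace K] [BorelSpace K]
  [SecondCountableTopology K] {N : ℕ}

lemma measurableSet_image_mul_left {g : Matrix (Fin N) (Fin N) K} (hg : IsUnit g.det)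
    {A : Set (Matrix (Fin N) (Fin N) K)} (hA : MeasurableSet A) :
    MeasurableSet ((g * ·) '' A) := by
  rw [Set.image_eq_preimage_of_inverse (leftInverse_nonsing_inv_mul hg)
    (fun x => by simp [← Matrix.mul_assoc, mul_nonsing_inv _ hg])]
  exact hA.preimage (continuous_const.matrix_mul continuous_id).measurable

lemma IsHaarOnSL.measure_image_mul_left {μ : Measure (Matrix (Fin N) (Fin N) K)}
    (hμ : IsHaarOnSL μ) {g : Matrix (Fin N) (Fin N) K} (hg : g.det = 1)
    {A : Set (Matrix (Fin N) (Fin N) K)} (hA : MeasurableSet A) :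
    μ ((g * ·) '' A) = μ A := by
  have hg' : IsUnit g.det := hg ▸ isUnit_one
  rw [← hμ.2.1 g hg _ (measurableSet_image_mul_left hg' hA),
    Set.preimage_image_eq _ (leftInverse_nonsing_inv_mul hg').injective]

lemma IsHaarOnSL.card_mul_le_measure {μ : Measure (Matrix (Fin N) (Fin N) K)}
    (hμ : IsHaarOnSL μ) {ι : Type*} [Fintype ι] (g : ι → Matrix (Fin N) (Fin N) K)
    (hg : ∀ i, (g i).det = 1) {A T : Set (Matrix (Fin N) (Fin N) K)}
    (hA : MeasurableSet A) (hdisj : Pairwise (Disjoint on fun i => (g i * ·) '' A))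
    (hT : ∀ i, (g i * ·) '' A ⊆ T) :
    Fintype.card ι * μ A ≤ μ T := by
  have hmeas i : MeasurableSet ((g i * ·) '' A) :=
    measurableSet_image_mul_left ((hg i).symm ▸ isUnit_one) hA
  calc Fintype.card ι * μ A = ∑ i, μ ((g i * ·) '' A) := by
        simp [hμ.measure_image_mul_left (hg _) hA]
    _ = μ (⋃ i, (g i * ·) '' A) := by rw [measure_iUnion hdisj hmeas, tsum_fintype]
    _ ≤ μ T := measure_mono (Set.iUnion_subset hT)

end Measure

def integralSL (N : ℕ) (K : Type*) [NormedField K] : Set (Matrix (Fin N) (Fin N) K) :=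
  {g | g.det = 1 ∧ ∀ i j, ‖g i j‖ ≤ 1}

lemma isClosed_integralSL (N : ℕ) (K : Type*) [NormedField K] :
    IsClosed (integralSL N K) := by
  have hdet : IsClosed {g : Matrix (Fin N) (Fin N) K | g.det = 1} :=
    isClosed_eq continuous_id.matrix_det continuous_const
  have hent : IsClosed {g : Matrix (Fin N) (Fin N) K | ∀ i j, ‖g i j‖ ≤ 1} := by
    simp only [Set.ofPred_forall]
    exact isClosed_iInter fun i => isClosed_iInter fun j =>
      isClosed_le (continuous_id.matrix_elem i j).norm continuous_const
  exact hdet.inter hent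

lemma matSupNorm_eq_of_forall_le {N : ℕ} {K : Type*} [NormedField K]
    {g : Matrix (Fin N) (Fin N) K} {r : ℝ} (hle : ∀ i j, ‖g i j‖ ≤ r) {i j : Fin N}
    (hij : ‖g i j‖ = r) : matSupNorm g = r := by
  have : Nonempty (Fin N × Fin N) := ⟨(i, j)⟩
  refine le_antisymm (ciSup_le fun ij => hle ij.1 ij.2) ?_
  exact hij ▸ le_ciSup (f := fun ij : Fin N × Fin N => ‖g ij.1 ij.2‖)
    (Set.finite_range _).bddAbove (i, j)

section Ultrametric

variable {K : Type*} [NormedField K] [IsUltrametricDist K] {N : ℕ}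

lemma norm_det_le_of_norm_row_le {A : Matrix (Fin N) (Fin N) K} {C : ℝ} (hC : 0 ≤ C)
    (i : Fin N) (hrow : ∀ j, ‖A i j‖ ≤ C) (hA : ∀ i j, ‖A i j‖ ≤ 1) : ‖A.det‖ ≤ C := by
  rw [det_apply]
  refine IsUltrametricDist.norm_sum_le_of_forall_le_of_nonneg hC fun σ _ => ?_
  have hprod : ‖∏ x, A (σ x) x‖ ≤ C := by
    rw [norm_prod, ← Finset.mul_prod_erase _ _ (Finset.mem_univ (σ⁻¹ i))]
    calc ‖A (σ (σ⁻¹ i)) (σ⁻¹ i)‖ * ∏ x ∈ Finset.univ.erase (σ⁻¹ i), ‖A (σ x) x‖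
        ≤ C * 1 := by
          gcongr
          · simpa using hrow (σ⁻¹ i)
          · exact Finset.prod_le_one (fun _ _ => norm_nonneg _) (fun _ _ => hA _ _)
      _ = C := mul_one C
  rcases Int.units_eq_one_or (Equiv.Perm.sign σ) with h | h <;> simpa [h] using hprod

lemma exists_norm_eq_one_of_mem_integralSL {u : Matrix (Fin N) (Fin N) K}
    (hu : u ∈ integralSL N K) (i : Fin N) : ∃ j, ‖u i j‖ = 1 := by
  obtain ⟨j, -, hj⟩ :=
    Finset.exists_max_image Finset.univ (fun j => ‖u i j‖) ⟨i, Finset.mem_univ i⟩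
  have hdet :=
    norm_det_le_of_norm_row_le (norm_nonneg _) i (fun j' => hj j' (Finset.mem_univ j')) hu.2
  rw [hu.1, norm_one] at hdet
  exact ⟨j, le_antisymm (hu.2 i j) hdet⟩

end Ultrametric

section DiagTransvection

variable {K : Type*} [NormedField K] {n : ℕ}

noncomputable def diagTransvection (a c : K) : Matrix (Fin (n + 2)) (Fin (n + 2)) K :=
  diagonal (Fin.cons a (Fin.cons a⁻¹ 1)) * transvection 1 0 c

lemma det_diagTransvection {a : K} (ha : a ≠ 0) (c : K) :
    (diagTransvection (n := n) a c).det = 1 := by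
  simp [diagTransvection, det_transvection_of_ne, Fin.prod_univ_succ, ha]

variable (a c : K) (u : Matrix (Fin (n + 2)) (Fin (n + 2)) K) (j : Fin (n + 2))

lemma diagTransvection_mul_apply_zero :
    (diagTransvection (n := n) a c * u) 0 j = a * u 0 j := by
  simp [diagTransvection, Matrix.mul_assoc, transvection_mul_apply_of_ne]

lemma diagTransvection_mul_apply_one :
    (diagTransvection (n := n) a c * u) 1 j = a⁻¹ * (u 1 j + c * u 0 j) := by
  simp [diagTransvection, Matrix.mul_assoc, transvection_mul_apply_same]

lemma diagTransvection_mul_apply_succ_succ (i : Fin n) :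
    (diagTransvection (n := n) a c * u) i.succ.succ j = u i.succ.succ j := by
  simp [diagTransvection, Matrix.mul_assoc,
    transvection_mul_apply_of_ne _ _ _ _ (Fin.succ_succ_ne_one i)]

end DiagTransvection

section Translates

variable {K : Type*} [NormedField K] [IsUltrametricDist K] {n : ℕ} {a c : K}
  {u : Matrix (Fin (n + 2)) (Fin (n + 2)) K}

lemma norm_diagTransvection_mul_apply_le (ha : 1 ≤ ‖a‖) (hc : ‖c‖ ≤ ‖a‖)
    (hu : ∀ i j, ‖u i j‖ ≤ 1) (i j : Fin (n + 2)) :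
    ‖(diagTransvection (n := n) a c * u) i j‖ ≤ ‖a‖ := by
  have ha₀ : 0 < ‖a‖ := one_pos.trans_le ha
  rcases i.eq_zero_or_eq_succ with rfl | ⟨i, rfl⟩
  · rw [diagTransvection_mul_apply_zero, norm_mul]
    exact mul_le_of_le_one_right ha₀.le (hu 0 j)
  rcases i.eq_zero_or_eq_succ with rfl | ⟨i, rfl⟩
  · have hsum : ‖u 1 j + c * u 0 j‖ ≤ ‖a‖ := by
      refine (IsUltrametricDist.norm_add_le_max _ _).trans (max_le ((hu 1 j).trans ha) ?_)
      rw [norm_mul]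
      exact mul_le_of_le_one_right (norm_nonneg c) (hu 0 j) |>.trans hc
    rw [Fin.succ_zero_eq_one, diagTransvection_mul_apply_one, norm_mul, norm_inv]
    calc ‖a‖⁻¹ * ‖u 1 j + c * u 0 j‖ ≤ ‖a‖⁻¹ * ‖a‖ := by gcongr
      _ = 1 := inv_mul_cancel₀ ha₀.ne'
      _ ≤ ‖a‖ := ha
  · rw [diagTransvection_mul_apply_succ_succ]
    exact (hu _ j).trans ha

lemma diagTransvection_mul_mem_sphere (ha : 1 ≤ ‖a‖) (hc : ‖c‖ ≤ ‖a‖)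
    (hu : u ∈ integralSL (n + 2) K) :
    (diagTransvection (n := n) a c * u) ∈
      {g | g.det = 1 ∧ matSupNorm g = ‖a‖} := by
  have ha₀ : a ≠ 0 := norm_pos_iff.mp (one_pos.trans_le ha)
  obtain ⟨j, hj⟩ := exists_norm_eq_one_of_mem_integralSL hu 0
  refine ⟨by rw [det_mul, det_diagTransvection ha₀, hu.1, one_mul], ?_⟩
  refine matSupNorm_eq_of_forall_le (norm_diagTransvection_mul_apply_le ha hc hu.2)
    (i := 0) (j := j) ?_
  rw [diagTransvection_mul_apply_zero, norm_mul, hj, mul_one]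

/-- Rows `0` and `1` of `g_c u = g_{c'} v` give `(c - c') u₀ = v₁ - u₁`, and `u₀` has an
entry of norm one. -/
lemma disjoint_image_diagTransvection_mul {c' : K} (ha : a ≠ 0) (hcc' : 1 < ‖c - c'‖) :
    Disjoint ((diagTransvection a c * ·) '' integralSL (n + 2) K)
      ((diagTransvection a c' * ·) '' integralSL (n + 2) K) := by
  rw [Set.disjoint_left]
  rintro _ ⟨u, hu, rfl⟩ ⟨v, hv, huv⟩
  obtain ⟨j, hj⟩ := exists_norm_eq_one_of_mem_integralSL hu 0
  have row₀ : v 0 j = u 0 j := by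
    simpa [diagTransvection_mul_apply_zero, ha] using congrFun (congrFun huv 0) j
  have row₁ : v 1 j + c' * v 0 j = u 1 j + c * u 0 j := by
    simpa [diagTransvection_mul_apply_one, ha] using congrFun (congrFun huv 1) j
  have hdiff : (c - c') * u 0 j = v 1 j - u 1 j := by linear_combination -row₁ + c' * row₀
  have : ‖c - c'‖ ≤ 1 := by
    calc ‖c - c'‖ = ‖v 1 j - u 1 j‖ := by rw [← hdiff, norm_mul, hj, mul_one]
      _ ≤ 1 := by
        rw [sub_eq_add_neg]
        exact (IsUltrametricDist.norm_add_le_max _ _).trans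
          (max_le (hv.2 1 j) ((norm_neg _).trans_le (hu.2 1 j)))
  exact absurd hcc' this.not_gt

end Translates

lemma Padic.pow_neg_lt_norm_natCast_sub {p : ℕ} [Fact p.Prime] {k t s : ℕ} (ht : t < p ^ k)
    (hs : s < p ^ k) (hts : t ≠ s) : (p : ℝ) ^ (-(k : ℤ)) < ‖(t : ℚ_[p]) - s‖ := by
  by_contra! h
  have hdvd : ((p ^ k : ℕ) : ℤ) ∣ (t : ℤ) - s := by
    push_cast
    exact (Padic.norm_int_le_pow_iff_dvd _ _).mp (by push_cast; exact h)
  exact hts ((Nat.modEq_iff_dvd.mpr hdvd).eq_of_lt_of_lt hs ht).symm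

/-- With `μ_p` the Haar measure on `SL_N(ℚ_p)` normalized so that
`μ_p(SL_N(ℤ_p)) = 1`, there exist `a > 0` and a finite set `S` of primes such that
for all primes `p ∉ S` and all `k ≥ 0`,
`μ_p({g ∈ SL_N(ℚ_p) : max_{i,j}|g_{ij}|_p = p^k}) ≥ p^{a k}`. -/
theorem statement9 (N : ℕ) (hN : 2 ≤ N)
    (μ : (p : ℕ) → (hp : p.Prime) → Measure (Matrix (Fin N) (Fin N) (@Padic p ⟨hp⟩)))
    (hHaar : ∀ p hp, IsHaarOnSL (μ p hp))
    (hnorm : ∀ p hp, μ p hp {g | g.det = 1 ∧ ∀ i j, ‖g i j‖ ≤ 1} = 1) :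
    ∃ a : ℝ, 0 < a ∧ ∃ S : Finset ℕ,
      ∀ p : ℕ, (hp : p.Prime) → p ∉ S → ∀ k : ℕ,
        ENNReal.ofReal ((p : ℝ) ^ (a * k)) ≤
          μ p hp {g | g.det = 1 ∧ matSupNorm g = (p : ℝ) ^ k} := by
  refine ⟨1, one_pos, ∅, fun p hp _ k => ?_⟩
  have : Fact p.Prime := ⟨hp⟩
  obtain ⟨n, rfl⟩ := Nat.exists_eq_add_of_le' hN
  set a : ℚ_[p] := (p : ℚ_[p]) ^ (-(k : ℤ))
  have ha : ‖a‖ = (p : ℝ) ^ k := by simp [a]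
  have ha₁ : 1 ≤ ‖a‖ := ha ▸ one_le_pow₀ (by exact_mod_cast hp.one_lt.le)
  have ha₀ : a ≠ 0 := norm_pos_iff.mp (one_pos.trans_le ha₁)
  have hc (t : ℕ) : ‖(t : ℚ_[p]) * a‖ ≤ ‖a‖ := by
    rw [norm_mul]
    exact mul_le_of_le_one_left (norm_nonneg a) (by simpa using Padic.norm_int_le_one t)
  have hdisj : Pairwise (Disjoint on fun t : Fin (p ^ k) =>
      (diagTransvection a ((t : ℚ_[p]) * a) * ·) '' integralSL (n + 2) ℚ_[p]) := by
    intro t s hts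
    refine disjoint_image_diagTransvection_mul ha₀ ?_
    have hts' := Padic.pow_neg_lt_norm_natCast_sub t.isLt s.isLt (Fin.val_injective.ne hts)
    rw [_root_.zpow_neg, zpow_natCast,
      inv_lt_iff_one_lt_mul₀ (pow_pos (Nat.cast_pos.mpr hp.pos) k)] at hts'
    rwa [← sub_mul, norm_mul, ha]
  have hpack := (hHaar p hp).card_mul_le_measure _ (fun t => det_diagTransvection ha₀ _)
    (isClosed_integralSL _ _).measurableSet hdisj
    (T := {g | g.det = 1 ∧ matSupNorm g = ‖a‖})
    (fun t => Set.image_subset_iff.mpr fun _ hu =>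
      diagTransvection_mul_mem_sphere ha₁ (hc t) hu)
  rw [Fintype.card_fin, integralSL, hnorm, mul_one, ha] at hpack
  calc ENNReal.ofReal ((p : ℝ) ^ ((1 : ℝ) * k)) = ((p ^ k : ℕ) : ENNReal) := by
        rw [one_mul, Real.rpow_natCast, ← Nat.cast_pow, ENNReal.ofReal_natCast]
    _ ≤ _ := hpack
end
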